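/- Define the map $\mathrm{tr}': \mathrm{Mat}_{2n \times 4n}(F) \to F$ by writing $Y = \begin{pmatrix} Y_1 & Z_1 & Y_2 \\ Y_3 & Z_2 & Y_4 \end{pmatrix}$ with $Y_i \in \mathrm{Mat}_{n\times n}$, $Z_j \in \mathrm{Mat}_{n \times 2n}$, and setting $\mathrm{tr}'(Y) = \mathrm{tr}(Y_1 + Y_4)$. Then for $(g_1, g_2) \in Sp_{2n}(F) \times Sp_{2n}(F)$ embedded in $Sp_{4n}(F)$ as $\iota(g_1,g_2) = \begin{pmatrix} g_{1,1} & 0 & g_{1,2} \\ 0 & g_2 & 0 \\ g_{1,3} & 0 & g_{1,4}\end{pmatrix}$, one has $\mathrm{tr}'(g_1 Y \, \iota(g_1,g_2)^{-1}) = \mathrm{tr}'(Y)$ for all $Y \in \mathrm{Mat}_{2n\times 4n}(F)$; i.e., the character defined via $\mathrm{tr}'$ is stabilized by the diagonal action of $Sp_{2n}\times Sp_{2n}$. -/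

import Mathlib

open Matrix

variable (F : Type*) [Field F]

/-- The antidiagonal-type symplectic form on `F^{2n}`. -/
def Jsp (n : ℕ) : Matrix (Fin (2 * n)) (Fin (2 * n)) F :=
  Matrix.of fun i j =>
    if (j : ℕ) = (i : ℕ) + n then 1 else if (i : ℕ) = (j : ℕ) + n then -1 else 0

/-- `g` preserves the alternating form `J`. -/
def IsSymp {ι : Type*} [Fintype ι] (J g : Matrix ι ι F) : Prop :=
  g * J * gᵀ = J

/-- Index type for `F^{4n}`: outer coordinates (two `Fin n` summands) and middle
coordinates (the `Fin (2n)` summand). -/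
abbrev Idx4 (n : ℕ) := Fin n ⊕ Fin (2 * n) ⊕ Fin n

/-- Top embedding `Fin n → Fin (2n)`. -/
def topE {n : ℕ} (p : Fin n) : Fin (2 * n) := ⟨(p : ℕ), by have := p.2; omega⟩

/-- Bottom embedding `Fin n → Fin (2n)`. -/
def botE {n : ℕ} (p : Fin n) : Fin (2 * n) := ⟨(p : ℕ) + n, by have := p.2; omega⟩

/-- The embedding `ι(g₁,g₂) = (g₁,₁ 0 g₁,₂; 0 g₂ 0; g₁,₃ 0 g₁,₄)` of
`Sp_{2n} × Sp_{2n}` into `Sp_{4n}`. -/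
def emb2 {n : ℕ} (A B : Matrix (Fin (2 * n)) (Fin (2 * n)) F) :
    Matrix (Idx4 n) (Idx4 n) F :=
  Matrix.of fun x y =>
    match x, y with
    | Sum.inl p, Sum.inl q => A (topE p) (topE q)
    | Sum.inl p, Sum.inr (Sum.inr q) => A (topE p) (botE q)
    | Sum.inr (Sum.inr p), Sum.inl q => A (botE p) (topE q)
    | Sum.inr (Sum.inr p), Sum.inr (Sum.inr q) => A (botE p) (botE q)
    | Sum.inr (Sum.inl p), Sum.inr (Sum.inl q) => B p q
    | _, _ => 0

/-- `tr'(Y) = tr(Y₁ + Y₄)`, where `Y = (Y₁ Z₁ Y₂; Y₃ Z₂ Y₄)` with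
`Yᵢ ∈ Mat_{n×n}` and `Zⱼ ∈ Mat_{n×2n}`. -/
def trPrime {n : ℕ} (Y : Matrix (Fin (2 * n)) (Idx4 n) F) : F :=
  (∑ p : Fin n, Y (topE p) (Sum.inl p)) + ∑ p : Fin n, Y (botE p) (Sum.inr (Sum.inr p))

/-- Decode an index of `Fin (2n)` as an outer coordinate of `Idx4 n`. -/
def eInv {n : ℕ} (j : Fin (2 * n)) : Idx4 n :=
  if h : (j : ℕ) < n then Sum.inl ⟨j, h⟩
  else Sum.inr (Sum.inr ⟨(j : ℕ) - n, by have := j.2; omega⟩)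

lemma eInv_topE {n : ℕ} (p : Fin n) : eInv (topE p) = Sum.inl p := by
  have hp := p.2
  simp only [eInv, topE, dif_pos hp]
  exact dif_pos hp

lemma eInv_botE {n : ℕ} (p : Fin n) : eInv (botE p) = Sum.inr (Sum.inr p) := by
  have hp := p.2
  have h : ¬ ((botE p : ℕ) < n) := by simp [botE]
  simp only [eInv, dif_neg h]
  congr 1
  congr 1
  exact Fin.ext (by simp [botE])

/-- The equivalence `Fin n ⊕ Fin n ≃ Fin (2n)` via `topE` and `botE`. -/
def splitEquiv (n : ℕ) : Fin n ⊕ Fin n ≃ Fin (2 * n) where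
  toFun := Sum.elim topE botE
  invFun j := if h : (j : ℕ) < n then Sum.inl ⟨j, h⟩
    else Sum.inr ⟨(j : ℕ) - n, by have := j.2; omega⟩
  left_inv x := by
    rcases x with p | p <;> have hp := p.2 <;> dsimp only [Sum.elim_inl, Sum.elim_inr]
    · rw [dif_pos (show ((topE p : ℕ) < n) from hp)]
      rfl
    · rw [dif_neg (show ¬ ((botE p : ℕ) < n) by simp [botE])]
      congr 1
      exact Fin.ext (by simp [botE])
  right_inv j := by
    dsimp only
    by_cases h : (j : ℕ) < n
    · rw [dif_pos h]; rfl
    · rw [dif_neg h]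
      have := j.2
      exact Fin.ext (by simp [botE]; omega)

lemma sum_split {M : Type*} [AddCommMonoid M] {n : ℕ} (f : Fin (2 * n) → M) :
    ∑ i, f i = (∑ p : Fin n, f (topE p)) + ∑ p : Fin n, f (botE p) := by
  rw [← (splitEquiv n).sum_comp f, Fintype.sum_sum_type]
  rfl

lemma embSumAux {n : ℕ} (h₁ h₂ : Matrix (Fin (2 * n)) (Fin (2 * n)) F)
    (f : Idx4 n → F) (j : Fin (2 * n)) :
    ∑ x : Idx4 n, f x * emb2 F h₁ h₂ x (eInv j)
      = ∑ m : Fin (2 * n), f (eInv m) * h₁ m j := by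
  rw [sum_split (fun m => f (eInv m) * h₁ m j)]
  rw [Fintype.sum_sum_type]
  conv_lhs => rw [Fintype.sum_sum_type]
  by_cases hj : (j : ℕ) < n
  · have hje : eInv j = Sum.inl ⟨j, hj⟩ := by simp [eInv, hj]
    have hjt : topE (⟨j, hj⟩ : Fin n) = j := rfl
    rw [hje]
    simp only [eInv_topE, eInv_botE, emb2, Matrix.of_apply, mul_zero,
      Finset.sum_const_zero, add_zero, hjt]
    ring
  · have hb : (j : ℕ) - n < n := by have := j.2; omega
    have hje : eInv j = Sum.inr (Sum.inr ⟨(j : ℕ) - n, hb⟩) := by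
      simp [eInv, hj]
    have hjt : botE (⟨(j : ℕ) - n, hb⟩ : Fin n) = j := Fin.ext (by simp [botE]; omega)
    rw [hje]
    simp only [eInv_topE, eInv_botE, emb2, Matrix.of_apply, mul_zero,
      Finset.sum_const_zero, add_zero, hjt]
    ring

/-- Projection onto the outer-columns square matrix. -/
def pmat {n : ℕ} (Y : Matrix (Fin (2 * n)) (Idx4 n) F) :
    Matrix (Fin (2 * n)) (Fin (2 * n)) F :=
  Matrix.of fun i j => Y i (eInv j)

lemma trPrime_eq_trace {n : ℕ} (Y : Matrix (Fin (2 * n)) (Idx4 n) F) :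
    trPrime F Y = Matrix.trace (pmat F Y) := by
  rw [Matrix.trace, trPrime]
  simp only [Matrix.diag]
  rw [sum_split (fun i => pmat F Y i i)]
  simp [pmat, eInv_topE, eInv_botE]

lemma pmat_mul {n : ℕ} (g₁ h₁ h₂ : Matrix (Fin (2 * n)) (Fin (2 * n)) F)
    (Y : Matrix (Fin (2 * n)) (Idx4 n) F) :
    pmat F (g₁ * Y * emb2 F h₁ h₂) = g₁ * pmat F Y * h₁ := by
  ext i j
  show (g₁ * Y * emb2 F h₁ h₂) i (eInv j) = (g₁ * pmat F Y * h₁) i j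
  rw [Matrix.mul_apply, Matrix.mul_apply]
  rw [embSumAux F h₁ h₂ (fun x => (g₁ * Y) i x) j]
  rfl

/-- The character defined via `tr'` is stabilized by the diagonal action of
`Sp_{2n} × Sp_{2n}`: if `h₁, h₂` are the inverses of `g₁, g₂ ∈ Sp_{2n}`, then
`tr'(g₁ Y ι(g₁,g₂)⁻¹) = tr'(Y)` for all `Y ∈ Mat_{2n×4n}`. -/
theorem trPrime_invariant (n : ℕ) (hn : 0 < n)
    (g₁ g₂ h₁ h₂ : Matrix (Fin (2 * n)) (Fin (2 * n)) F)
    (hg₁ : IsSymp F (Jsp F n) g₁) (hg₂ : IsSymp F (Jsp F n) g₂)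
    (h₁inv : g₁ * h₁ = 1) (h₁inv' : h₁ * g₁ = 1)
    (h₂inv : g₂ * h₂ = 1) (h₂inv' : h₂ * g₂ = 1) :
    ∀ Y : Matrix (Fin (2 * n)) (Idx4 n) F,
      trPrime F (g₁ * Y * emb2 F h₁ h₂) = trPrime F Y := by
  intro Y
  rw [trPrime_eq_trace, trPrime_eq_trace, pmat_mul,
    Matrix.trace_mul_cycle, h₁inv', Matrix.one_mul]
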